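/- Let γ_L(n) denote the number of subsets W ⊆ H_n with D(𝔟_ℓ|W) ≤ N(𝔟_ℓ) − s_ℓ for 1 ≤ ℓ ≤ L (where H_n is the box Følner set in O_K). Then γ_L(nm) ≤ γ_L(n)^{m^d} for all n, m, L ≥ 1. -/

import Mathlib

set_option synthInstance.maxHeartbeats 1000000

open scoped Classical
open NumberField

/-- The box Følner set `H_n = ι({−n,…,n}^d)` in `𝓞 K`. -/
noncomputable def boxH {K : Type*} [Field K] [NumberField K] {d : ℕ}
    (ι : (Fin d → ℤ) ≃+ 𝓞 K) (n : ℕ) : Finset (𝓞 K) :=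
  (Fintype.piFinset (fun _ : Fin d => Finset.Icc (-(n : ℤ)) (n : ℤ))).image ι

/-- `γ_L(n)`: the number of subsets `W ⊆ H_n` with `D(𝔟_ℓ|W) ≤ N(𝔟_ℓ) − s_ℓ`
for `1 ≤ ℓ ≤ L`. -/
noncomputable def gammaL {K : Type*} [Field K] [NumberField K] {d : ℕ}
    (ι : (Fin d → ℤ) ≃+ 𝓞 K) (𝔟 : ℕ → Ideal (𝓞 K)) (s : ℕ → ℕ) (L n : ℕ) : ℕ :=
  ((boxH ι n).powerset.filter (fun W => ∀ ℓ < L,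
    Set.ncard ((Ideal.Quotient.mk (𝔟 ℓ)) '' (↑W : Set (𝓞 K)))
      ≤ Nat.card (𝓞 K ⧸ 𝔟 ℓ) - s ℓ)).card

/-! Tile `H_{nm}` by the `m^d` translates `c_a + H_n`. A set `W ⊆ H_{nm}` is determined by the
family of its pieces `(W ∩ (c_a + H_n)) - c_a ⊆ H_n`, and each piece again satisfies the residue
bounds, because these bounds are preserved by passing to subsets and by translation. -/

open Finset

theorem card_filter_powerset_le_pow_of_cover {G ι : Type*} [AddGroup G] [Fintype ι]
    (P : Finset G → Prop) (hP_mono : ∀ ⦃V W : Finset G⦄, V ⊆ W → P W → P V)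
    (hP_sub : ∀ (W : Finset G) (c : G), P W → P (W.image (· - c)))
    {B S : Finset G} (c : ι → G) (idx : G → ι) (hidx : ∀ w ∈ B, w - c (idx w) ∈ S) :
    #(B.powerset.filter P) ≤ #(S.powerset.filter P) ^ Fintype.card ι := by
  set pieces : Finset G → ι → Finset G := fun W a => (W.filter (idx · = a)).image (· - c a)
  have mem_pieces_iff (W : Finset G) (w : G) : w ∈ W ↔ w - c (idx w) ∈ pieces W (idx w) := by
    simp [pieces, and_comm]
  have maps : ∀ W ∈ B.powerset.filter P,
      pieces W ∈ Fintype.piFinset fun _ => S.powerset.filter P := by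
    simp only [mem_filter, mem_powerset, Fintype.mem_piFinset]
    rintro W ⟨hWB, hPW⟩ a
    refine ⟨?_, hP_sub _ _ (hP_mono (filter_subset _ W) hPW)⟩
    simp only [pieces, image_subset_iff, mem_filter]
    rintro w ⟨hw, rfl⟩
    exact hidx w (hWB hw)
  calc #(B.powerset.filter P)
      ≤ #(Fintype.piFinset fun _ : ι => S.powerset.filter P) :=
        card_le_card_of_injOn pieces maps fun W _ W' _ h => by
          ext w; rw [mem_pieces_iff W, mem_pieces_iff W', h]
    _ = #(S.powerset.filter P) ^ Fintype.card ι := by simp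

theorem Set.ncard_image_image_sub {F G H : Type*} [AddGroup G] [AddGroup H] [FunLike F G H]
    [AddMonoidHomClass F G H] (f : F) (S : Set G) (c : G) :
    (f '' ((· - c) '' S)).ncard = (f '' S).ncard := by
  rw [Set.image_image, show (fun x => f (x - c)) = (· - f c) ∘ f by ext; simp,
    Set.image_comp, Set.ncard_image_of_injective _ sub_left_injective]

section ResidueBounded

variable {R : Type*} [CommRing R] (𝔟 : ℕ → Ideal R) (s : ℕ → ℕ) (L : ℕ)

def ResidueBounded (W : Set R) : Prop :=
  ∀ ℓ < L, ((Ideal.Quotient.mk (𝔟 ℓ)) '' W).ncard ≤ Nat.card (R ⧸ 𝔟 ℓ) - s ℓ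

variable {𝔟 s L}

theorem ResidueBounded.mono {V W : Set R} (hW : W.Finite) (hVW : V ⊆ W)
    (h : ResidueBounded 𝔟 s L W) : ResidueBounded 𝔟 s L V := fun ℓ hℓ =>
  (Set.ncard_le_ncard (Set.image_mono hVW) (hW.image _)).trans (h ℓ hℓ)

theorem ResidueBounded.image_sub {W : Set R} (h : ResidueBounded 𝔟 s L W) (c : R) :
    ResidueBounded 𝔟 s L ((· - c) '' W) := fun ℓ hℓ => by
  rw [Set.ncard_image_image_sub]
  exact h ℓ hℓ

end ResidueBounded

-- The cells `[(2n+1)a - nm, (2n+1)a + 2n - nm]`, `a < m`, of width `2n + 1` cover `[-nm, nm]`.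
theorem Int.exists_sub_mem_Icc_of_mem_Icc_mul (n : ℕ) {m : ℕ} (hm : 1 ≤ m) {j : ℤ}
    (hj : j ∈ Icc (-(n * m : ℤ)) (n * m)) :
    ∃ a : Fin m, j - ((2 * n + 1) * (a : ℤ) + n - n * m) ∈ Icc (-(n : ℤ)) n := by
  rw [mem_Icc] at hj
  have hpos : (0 : ℤ) < 2 * n + 1 := by positivity
  set q := (j + n * m) / (2 * n + 1)
  have hq0 : 0 ≤ q := Int.ediv_nonneg (by linarith) hpos.le
  have hqm : q < m := by
    rw [Int.ediv_lt_iff_lt_mul hpos]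
    nlinarith [(by exact_mod_cast hm : (1 : ℤ) ≤ m)]
  refine ⟨⟨q.toNat, by omega⟩, ?_⟩
  have hdiv := Int.emod_add_mul_ediv (j + n * m) (2 * n + 1)
  have hr0 := Int.emod_nonneg (j + n * m) hpos.ne'
  have hr := Int.emod_lt_of_pos (j + n * m) hpos
  simp only [mem_Icc, Int.toNat_of_nonneg hq0]
  constructor <;> linarith

section Box

variable {K : Type*} [Field K] [NumberField K] {d : ℕ} (ι : (Fin d → ℤ) ≃+ 𝓞 K)

theorem mem_boxH_iff {n : ℕ} {w : 𝓞 K} :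
    w ∈ boxH ι n ↔ ∀ i, ι.symm w i ∈ Icc (-(n : ℤ)) n := by
  simp only [boxH, mem_image, Fintype.mem_piFinset]
  exact ⟨fun ⟨v, hv, hw⟩ => hw ▸ by simpa using hv, fun h => ⟨_, h, ι.apply_symm_apply w⟩⟩

def boxCellCentre (n m : ℕ) (a : Fin d → Fin m) : 𝓞 K :=
  ι fun i => (2 * n + 1) * (a i : ℤ) + n - n * m

theorem exists_sub_boxCellCentre_mem_boxH (n : ℕ) {m : ℕ} (hm : 1 ≤ m) {w : 𝓞 K}
    (hw : w ∈ boxH ι (n * m)) : ∃ a, w - boxCellCentre ι n m a ∈ boxH ι n := by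
  rw [mem_boxH_iff] at hw
  choose a ha using fun i =>
    Int.exists_sub_mem_Icc_of_mem_Icc_mul n hm (by exact_mod_cast hw i)
  exact ⟨a, (mem_boxH_iff ι).2 fun i => by simpa [boxCellCentre] using ha i⟩

-- `gammaL` filters the image of the powerset in `Finset (Set (𝓞 K))`, formed through the
-- `Finset` monad.
theorem gammaL_eq_card_filter_powerset (𝔟 : ℕ → Ideal (𝓞 K)) (s : ℕ → ℕ) (L n : ℕ) :
    gammaL ι 𝔟 s L n =
      #((boxH ι n).powerset.filter fun W : Finset (𝓞 K) => ResidueBounded 𝔟 s L W) := by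
  rw [gammaL, show ((boxH ι n).powerset >>= fun W => pure (W : Set (𝓞 K)))
      = (boxH ι n).powerset.image (↑) from sup_singleton_apply _ _,
    filter_image, card_image_of_injective _ coe_injective]
  exact congrArg card (filter_congr fun _ _ => Iff.rfl)

end Box

theorem stmt16_general {K : Type*} [Field K] [NumberField K] {d : ℕ}
    (ι : (Fin d → ℤ) ≃+ 𝓞 K) (𝔟 : ℕ → Ideal (𝓞 K)) (s : ℕ → ℕ)
    (L n m : ℕ) (hm : 1 ≤ m) :
    gammaL ι 𝔟 s L (n * m) ≤ gammaL ι 𝔟 s L n ^ (m ^ d) := by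
  have : NeZero m := ⟨by omega⟩
  choose! idx hidx using fun w (hw : w ∈ boxH ι (n * m)) =>
    exists_sub_boxCellCentre_mem_boxH ι n hm hw
  have key := card_filter_powerset_le_pow_of_cover
    (fun W : Finset (𝓞 K) => ResidueBounded 𝔟 s L W)
    (fun V W hVW => ResidueBounded.mono W.finite_toSet (coe_subset.2 hVW))
    (fun W c h => by simpa only [coe_image] using h.image_sub c)
    (boxCellCentre ι n m) idx hidx
  rw [Fintype.card_fun, Fintype.card_fin, Fintype.card_fin] at key
  rwa [gammaL_eq_card_filter_powerset, gammaL_eq_card_filter_powerset]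

/-- subadditivity of pattern counts: `γ_L(nm) ≤ γ_L(n)^{m^d}`. -/
theorem stmt16 {K : Type*} [Field K] [NumberField K] {d : ℕ}
    (ι : (Fin d → ℤ) ≃+ 𝓞 K) (𝔟 : ℕ → Ideal (𝓞 K)) (s : ℕ → ℕ)
    [∀ ℓ, Finite (𝓞 K ⧸ 𝔟 ℓ)] (hprop : ∀ ℓ, 𝔟 ℓ ≠ ⊤) (hbot : ∀ ℓ, 𝔟 ℓ ≠ ⊥)
    (hs : ∀ ℓ, 1 ≤ s ℓ) (L n m : ℕ) (hn : 1 ≤ n) (hm : 1 ≤ m) (hL : 1 ≤ L) :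
    gammaL ι 𝔟 s L (n * m) ≤ gammaL ι 𝔟 s L n ^ (m ^ d) :=
  stmt16_general ι 𝔟 s L n m hm
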